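/- The resurrection kernel is symmetric: for all x, y ∈ ℝ^d_+ one has q(x,y) = q(y,x). -/

import Mathlib

open MeasureTheory

/-- The Euclidean norm on `ℝ^{m} × ℝ`, viewed as `ℝ^{m+1}`. -/
noncomputable def nrm {m : ℕ} (x : EuclideanSpace ℝ (Fin m) × ℝ) : ℝ :=
  Real.sqrt (‖x.1‖ ^ 2 + x.2 ^ 2)

namespace ResSym

open Real

variable {n : ℕ}

local notation "V" => (EuclideanSpace ℝ (Fin n) × ℝ)

/-- squared Euclidean norm on the product -/
noncomputable def nsq (p : V) : ℝ := ‖p.1‖ ^ 2 + p.2 ^ 2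

/-- Euclidean inner product on the product -/
noncomputable def i2 (p q : V) : ℝ := (inner ℝ p.1 q.1 : ℝ) + p.2 * q.2

lemma nsq_nonneg (p : V) : 0 ≤ nsq p := by
  unfold nsq; positivity

lemma nrm_eq_sqrt_nsq (p : V) : nrm p = Real.sqrt (nsq p) := rfl

lemma nrm_sq (p : V) : nrm p ^ 2 = nsq p := Real.sq_sqrt (nsq_nonneg p)

lemma nrm_nonneg (p : V) : 0 ≤ nrm p := Real.sqrt_nonneg _

lemma nsq_pos (p : V) (h : p.2 ≠ 0) : 0 < nsq p := by
  have h1 : (0:ℝ) ≤ ‖p.1‖ ^ 2 := by positivity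
  have h2 : 0 < p.2 ^ 2 := by positivity
  unfold nsq; linarith

lemma i2_self (p : V) : i2 p p = nsq p := by
  unfold i2 nsq
  rw [real_inner_self_eq_norm_sq]
  ring

lemma i2_comm (p q : V) : i2 p q = i2 q p := by
  simp [i2, real_inner_comm, mul_comm]

lemma nsq_sub (p q : V) : nsq (p - q) = nsq p - 2 * i2 p q + nsq q := by
  have := norm_sub_sq_real p.1 q.1
  simp only [nsq, i2, Prod.fst_sub, Prod.snd_sub]
  rw [this]; ring

lemma nsq_smul (r : ℝ) (p : V) : nsq (r • p) = r ^ 2 * nsq p := by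
  simp only [nsq, Prod.smul_fst, Prod.smul_snd, norm_smul, smul_eq_mul,
    Real.norm_eq_abs, mul_pow, sq_abs]
  ring

lemma i2_smul_left (r : ℝ) (p q : V) : i2 (r • p) q = r * i2 p q := by
  simp only [i2, Prod.smul_fst, Prod.smul_snd, real_inner_smul_left, smul_eq_mul]
  ring

lemma i2_smul_right (r : ℝ) (p q : V) : i2 p (r • q) = r * i2 p q := by
  rw [i2_comm, i2_smul_left, i2_comm]

lemma i2_add_right (p q r : V) : i2 p (q + r) = i2 p q + i2 p r := by
  simp only [i2, Prod.fst_add, Prod.snd_add, inner_add_right]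
  ring

/-- squared distance identity for inversions -/
lemma nsq_inv_sub (p q : V) (hp : nsq p ≠ 0) (hq : nsq q ≠ 0) :
    nsq ((nsq p)⁻¹ • p - (nsq q)⁻¹ • q) = nsq (p - q) / (nsq p * nsq q) := by
  rw [nsq_sub, nsq_smul, nsq_smul, i2_smul_left, i2_smul_right, nsq_sub]
  field_simp
  ring



local notation "E" => (EuclideanSpace ℝ (Fin n))

/-- The linear isometry `(u, t) ↦ (-u, t)`. -/
noncomputable def Lm : V →L[ℝ] V :=
  (-(ContinuousLinearMap.fst ℝ E ℝ)).prod (ContinuousLinearMap.snd ℝ E ℝ)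

lemma Lm_apply (p : V) : (Lm p : V) = (-p.1, p.2) := rfl

lemma Lm_Lm (p : V) : Lm (Lm p) = p := by simp [Lm_apply]

lemma nsq_Lm (p : V) : nsq (Lm p) = nsq p := by
  simp [Lm_apply, nsq]

/-- center of inversion (on the boundary hyperplane) -/
noncomputable def aP (x y : V) : V := (x.1 + (x.2 / (x.2 + y.2)) • (y.1 - x.1), 0)

/-- squared-size parameter -/
noncomputable def kK (x y : V) : ℝ := ‖y.1 - x.1‖ ^ 2 + (x.2 + y.2) ^ 2

/-- radius parameter of the inversion -/
noncomputable def cC (x y : V) : ℝ := x.2 * y.2 * kK x y / (x.2 + y.2) ^ 2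

/-- The Möbius involution of the half-spaces swapping `x` and `y`. -/
noncomputable def Tm (x y z : V) : V :=
  aP x y + (cC x y / nsq (z - aP x y)) • Lm (z - aP x y)


lemma Lm_fst (p : V) : (Lm p).1 = -p.1 := rfl
lemma Lm_snd (p : V) : (Lm p).2 = p.2 := rfl

section Setup

variable {x y : EuclideanSpace ℝ (Fin n) × ℝ} (hx : 0 < x.2) (hy : 0 < y.2)

lemma aP_snd : (aP x y).2 = 0 := rfl

lemma aP_fst : (aP x y).1 = x.1 + (x.2 / (x.2 + y.2)) • (y.1 - x.1) := rfl

lemma sub_aP_snd (z : V) : (z - aP x y).2 = z.2 := by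
  simp [aP]

include hx hy

lemma kK_pos : 0 < kK x y := by
  have h1 : (0:ℝ) < (x.2 + y.2) ^ 2 := by positivity
  have h2 : (0:ℝ) ≤ ‖y.1 - x.1‖ ^ 2 := by positivity
  unfold kK; linarith

lemma cC_pos : 0 < cC x y := by
  have hk := kK_pos hx hy
  have h1 : (0:ℝ) < (x.2 + y.2) ^ 2 := by positivity
  unfold cC; positivity

omit hx hy in
lemma x_sub_aP_fst : (x - aP x y).1 = -((x.2 / (x.2 + y.2)) • (y.1 - x.1)) := by
  simp [aP]

lemma y_sub_aP_fst : (y - aP x y).1 = (y.2 / (x.2 + y.2)) • (y.1 - x.1) := by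
  have hs : x.2 + y.2 ≠ 0 := by positivity
  have h : y.2 / (x.2 + y.2) = 1 - x.2 / (x.2 + y.2) := by field_simp; ring
  simp only [aP, Prod.fst_sub, h, sub_smul, one_smul]
  abel

lemma nsq_x_sub_aP : nsq (x - aP x y) = x.2 ^ 2 * kK x y / (x.2 + y.2) ^ 2 := by
  have hs : x.2 + y.2 ≠ 0 := by positivity
  have h2 : (x - aP x y).2 = x.2 := by simp [aP]
  rw [nsq, x_sub_aP_fst, h2, norm_neg, norm_smul, Real.norm_eq_abs, mul_pow, sq_abs, kK]
  field_simp

lemma nsq_y_sub_aP : nsq (y - aP x y) = y.2 ^ 2 * kK x y / (x.2 + y.2) ^ 2 := by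
  have hs : x.2 + y.2 ≠ 0 := by positivity
  have h2 : (y - aP x y).2 = y.2 := by simp [aP]
  rw [nsq, y_sub_aP_fst hx hy, h2, norm_smul, Real.norm_eq_abs, mul_pow, sq_abs, kK]
  field_simp

lemma nsq_x_sub_aP_pos : 0 < nsq (x - aP x y) := by
  rw [nsq_x_sub_aP hx hy]
  have hk := kK_pos hx hy
  have h1 : (0:ℝ) < (x.2 + y.2) ^ 2 := by positivity
  positivity

lemma nsq_y_sub_aP_pos : 0 < nsq (y - aP x y) := by
  rw [nsq_y_sub_aP hx hy]
  have hk := kK_pos hx hy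
  have h1 : (0:ℝ) < (x.2 + y.2) ^ 2 := by positivity
  positivity

lemma cC_div_nsq_x : cC x y / nsq (x - aP x y) = y.2 / x.2 := by
  rw [nsq_x_sub_aP hx hy, cC]
  have hk := (kK_pos hx hy).ne'
  have hs : x.2 + y.2 ≠ 0 := by positivity
  have hx' : x.2 ≠ 0 := hx.ne'
  have hy' : y.2 ≠ 0 := hy.ne'
  field_simp

lemma cC_div_nsq_y : cC x y / nsq (y - aP x y) = x.2 / y.2 := by
  rw [nsq_y_sub_aP hx hy, cC]
  have hk := (kK_pos hx hy).ne'
  have hs : x.2 + y.2 ≠ 0 := by positivity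
  have hx' : x.2 ≠ 0 := hx.ne'
  have hy' : y.2 ≠ 0 := hy.ne'
  field_simp

lemma Tm_x : Tm x y x = y := by
  have hs : x.2 + y.2 ≠ 0 := by positivity
  have hx' : x.2 ≠ 0 := hx.ne'
  rw [Tm, cC_div_nsq_x hx hy]
  apply Prod.ext
  · rw [Prod.fst_add, Prod.smul_fst, Lm_fst, x_sub_aP_fst, neg_neg, smul_smul,
      aP_fst, add_assoc, ← add_smul]
    have hc : x.2 / (x.2 + y.2) + y.2 / x.2 * (x.2 / (x.2 + y.2)) = 1 := by
      field_simp
    rw [hc, one_smul]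
    abel
  · rw [Prod.snd_add, Prod.smul_snd, Lm_snd, sub_aP_snd, aP_snd, smul_eq_mul, zero_add]
    field_simp

lemma Tm_y : Tm x y y = x := by
  have hs : x.2 + y.2 ≠ 0 := by positivity
  have hy' : y.2 ≠ 0 := hy.ne'
  rw [Tm, cC_div_nsq_y hx hy]
  apply Prod.ext
  · rw [Prod.fst_add, Prod.smul_fst, Lm_fst, y_sub_aP_fst hx hy, smul_neg, smul_smul,
      aP_fst]
    have hc : x.2 / y.2 * (y.2 / (x.2 + y.2)) = x.2 / (x.2 + y.2) := by
      field_simp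
    rw [hc]
    abel
  · rw [Prod.snd_add, Prod.smul_snd, Lm_snd, sub_aP_snd, aP_snd, smul_eq_mul, zero_add]
    field_simp

omit hx hy in
lemma Tm_snd (z : V) : (Tm x y z).2 = cC x y / nsq (z - aP x y) * z.2 := by
  rw [Tm, Prod.snd_add, Prod.smul_snd, Lm_snd, sub_aP_snd, aP_snd, smul_eq_mul, zero_add]

lemma Tm_invol (z : V) (hz : z.2 ≠ 0) : Tm x y (Tm x y z) = z := by
  have hN : nsq (z - aP x y) ≠ 0 := (nsq_pos _ (by rwa [sub_aP_snd])).ne'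
  have hc : cC x y ≠ 0 := (cC_pos hx hy).ne'
  have h1 : Tm x y z - aP x y = (cC x y / nsq (z - aP x y)) • Lm (z - aP x y) := by
    rw [Tm, add_sub_cancel_left]
  have h2 : nsq (Tm x y z - aP x y) = cC x y ^ 2 / nsq (z - aP x y) := by
    rw [h1, nsq_smul, nsq_Lm]
    field_simp
  conv_lhs => rw [Tm]
  rw [h2, h1, _root_.map_smul, Lm_Lm, smul_smul]
  have hcoef : cC x y / (cC x y ^ 2 / nsq (z - aP x y)) * (cC x y / nsq (z - aP x y)) = 1 := by
    field_simp
  rw [hcoef, one_smul]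
  abel

omit hx hy in
lemma Tm_dist (z w : V) (hz : nsq (z - aP x y) ≠ 0) (hw : nsq (w - aP x y) ≠ 0) :
    nsq (Tm x y z - Tm x y w)
      = cC x y ^ 2 * nsq (z - w) / (nsq (z - aP x y) * nsq (w - aP x y)) := by
  have h1 : Tm x y z - Tm x y w
      = cC x y • ((nsq (Lm (z - aP x y)))⁻¹ • Lm (z - aP x y)
          - (nsq (Lm (w - aP x y)))⁻¹ • Lm (w - aP x y)) := by
    rw [Tm, Tm, add_sub_add_left_eq_sub, nsq_Lm, nsq_Lm, smul_sub, smul_smul, smul_smul,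
      div_eq_mul_inv, div_eq_mul_inv]
  rw [h1, nsq_smul, nsq_inv_sub _ _ (by rwa [nsq_Lm]) (by rwa [nsq_Lm]), ← map_sub,
    nsq_Lm, nsq_Lm, nsq_Lm]
  have h3 : z - aP x y - (w - aP x y) = z - w := by abel
  rw [h3]
  field_simp

end Setup

section Deriv

/-- the functional `h ↦ i2 w h` as a continuous linear map -/
noncomputable def i2c (w : V) : V →L[ℝ] ℝ :=
  (innerSL ℝ w.1).comp (ContinuousLinearMap.fst ℝ E ℝ)
    + w.2 • (ContinuousLinearMap.snd ℝ E ℝ)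

lemma i2c_apply (w h : V) : i2c w h = i2 w h := by
  simp [i2c, i2]

lemma Tm_fderiv (x y z : V) (hz : nsq (z - aP x y) ≠ 0) :
    HasFDerivAt (Tm x y) (fderiv ℝ (Tm x y) z) z ∧
    ∀ h, fderiv ℝ (Tm x y) z h
      = (cC x y / nsq (z - aP x y)) • Lm h
        + (-2 * cC x y / nsq (z - aP x y) ^ 2 * i2 (z - aP x y) h) • Lm (z - aP x y) := by
  have hnsq : ∀ w : V, nsq (w - aP x y)
      = (inner ℝ (w.1 - (aP x y).1) (w.1 - (aP x y).1) : ℝ) + w.2 * w.2 := by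
    intro w
    rw [nsq, real_inner_self_eq_norm_sq, Prod.fst_sub, sub_aP_snd]
    ring
  have hTm : Tm x y = fun w : V =>
      aP x y + (cC x y * ((inner ℝ (w.1 - (aP x y).1) (w.1 - (aP x y).1) : ℝ) + w.2 * w.2)⁻¹)
        • Lm (w - aP x y) := by
    funext w
    rw [Tm, div_eq_mul_inv, hnsq w]
  -- derivative of the first-coordinate map
  have hfst : HasFDerivAt (fun w : V => w.1 - (aP x y).1)
      (ContinuousLinearMap.fst ℝ E ℝ) z :=
    (ContinuousLinearMap.fst ℝ E ℝ).hasFDerivAt.sub_const _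
  have hsnd : HasFDerivAt (fun w : V => w.2) (ContinuousLinearMap.snd ℝ E ℝ) z :=
    (ContinuousLinearMap.snd ℝ E ℝ).hasFDerivAt
  have hinner := hfst.inner ℝ hfst
  have hmul := hsnd.mul hsnd
  have hN := hinner.add hmul
  have hNz : ((inner ℝ (z.1 - (aP x y).1) (z.1 - (aP x y).1) : ℝ) + z.2 * z.2) ≠ 0 := by
    rw [← hnsq z]; exact hz
  have hNinv := (hasFDerivAt_inv hNz).comp z hN
  have hcmul := hNinv.const_mul (cC x y)
  have hLf : HasFDerivAt (fun w : V => Lm (w - aP x y)) (Lm : V →L[ℝ] V) z := by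
    have h1 : (fun w : V => Lm (w - aP x y)) = fun w : V => Lm w - Lm (aP x y) := by
      funext w; rw [map_sub]
    rw [h1]
    simpa using (Lm.hasFDerivAt (x := z)).sub_const (Lm (aP x y))
  have hsm := hcmul.smul hLf
  have hfinal := (hsm.const_add (aP x y)).congr_of_eventuallyEq
    (Filter.EventuallyEq.of_eq hTm)
  refine ⟨hfinal.differentiableAt.hasFDerivAt, ?_⟩
  intro h
  rw [hfinal.fderiv]
  simp only [ContinuousLinearMap.add_apply, ContinuousLinearMap.smul_apply,
    ContinuousLinearMap.smulRight_apply, ContinuousLinearMap.comp_apply,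
    ContinuousLinearMap.prod_apply, fderivInnerCLM_apply, ContinuousLinearMap.coe_fst',
    ContinuousLinearMap.coe_snd', smul_eq_mul, neg_smul, ContinuousLinearMap.neg_apply,
    Function.comp_apply, ContinuousLinearMap.one_apply,
      ContinuousLinearMap.toSpanSingleton_apply, Pi.add_apply, Pi.mul_apply]
  rw [← hnsq z]
  have hi2 : i2 (z - aP x y) h = (inner ℝ (z.1 - (aP x y).1) h.1 : ℝ) + z.2 * h.2 := by
    rw [i2, Prod.fst_sub, sub_aP_snd]
  rw [hi2, real_inner_comm h.1 (z.1 - (aP x y).1)]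
  rw [div_eq_mul_inv, div_eq_mul_inv]
  match_scalars <;> field_simp [hz] <;> ring

lemma finrank_V : Module.finrank ℝ (EuclideanSpace ℝ (Fin n) × ℝ) = n + 1 := by
  rw [Module.finrank_prod, finrank_euclideanSpace_fin, Module.finrank_self]

lemma Tm_det (x y z : V) (hN : 0 < nsq (z - aP x y)) (hc : 0 < cC x y)
    (D : V →L[ℝ] V)
    (hD : ∀ h, D h = (cC x y / nsq (z - aP x y)) • Lm h
        + (-2 * cC x y / nsq (z - aP x y) ^ 2 * i2 (z - aP x y) h) • Lm (z - aP x y)) :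
    |D.det| = (cC x y / nsq (z - aP x y)) ^ (n + 1) := by
  set w : V := z - aP x y with hw
  set N : ℝ := nsq w with hNdef
  set c : ℝ := cC x y with hcdef
  set lam : ℝ := c / N with hlam
  have hN' : N ≠ 0 := hN.ne'
  have hlampos : 0 < lam := div_pos hc hN
  -- the reflection-type linear map
  set R : V →ₗ[ℝ] V :=
    lam • (LinearMap.id : V →ₗ[ℝ] V)
      + LinearMap.smulRight ((i2c w).toLinearMap) ((-2 * c / N ^ 2) • w) with hR
  have hRapp : ∀ h : V, R h = lam • h + (-2 * c / N ^ 2 * i2 w h) • w := by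
    intro h
    simp [hR, LinearMap.smulRight_apply, i2c_apply, smul_smul, mul_comm]
  have claim1 : (D : V →ₗ[ℝ] V) = Lm.toLinearMap.comp R := by
    apply LinearMap.ext
    intro h
    have h1 : (Lm.toLinearMap.comp R) h = Lm (R h) := rfl
    rw [h1, hRapp h, map_add, _root_.map_smul, _root_.map_smul]
    exact hD h
  have claim2 : R.comp R = (lam ^ 2) • (LinearMap.id : V →ₗ[ℝ] V) := by
    apply LinearMap.ext
    intro h
    have h1 : (R.comp R) h = R (R h) := rfl
    have hi : i2 w (R h) = (lam + -2 * c / N ^ 2 * N) * i2 w h := by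
      rw [hRapp h, i2_add_right, i2_smul_right, i2_smul_right, i2_self, ← hNdef]
      ring
    have hc1 : lam + -2 * c / N ^ 2 * N = -lam := by
      rw [hlam]
      field_simp
      ring
    rw [h1, hRapp (R h), hi, hc1, hRapp h]
    simp only [LinearMap.smul_apply, LinearMap.id_apply, smul_add, smul_smul]
    match_scalars <;> ring
  have claim3 : ((Lm (n := n)).toLinearMap).comp Lm.toLinearMap = LinearMap.id := by
    apply LinearMap.ext
    intro h
    have h1 : (Lm.toLinearMap.comp Lm.toLinearMap) h = Lm (Lm h) := rfl
    rw [h1, Lm_Lm]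
    rfl
  have hdetLm : |LinearMap.det ((Lm (n := n)).toLinearMap)| = 1 := by
    have h2 : LinearMap.det ((Lm (n := n)).toLinearMap)
        * LinearMap.det ((Lm (n := n)).toLinearMap) = 1 := by
      rw [← LinearMap.det_comp, claim3, LinearMap.det_id]
    rw [← Real.sqrt_mul_self_eq_abs, h2, Real.sqrt_one]
  have hdetR : |LinearMap.det R| = lam ^ (n + 1) := by
    have h2 : LinearMap.det R * LinearMap.det R = (lam ^ (n + 1)) ^ 2 := by
      rw [← LinearMap.det_comp, claim2, LinearMap.det_smul, LinearMap.det_id, finrank_V]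
      ring
    rw [← Real.sqrt_mul_self_eq_abs, h2, Real.sqrt_sq (by positivity)]
  have hDdet : D.det = LinearMap.det (Lm.toLinearMap.comp R) := by
    rw [← claim1]
  rw [hDdet, LinearMap.det_comp, abs_mul, hdetLm, hdetR, one_mul]

end Deriv

end ResSym

open ResSym

/-- The resurrection kernel `q(x,y)` on the upper half-space of `ℝ^{m+1}` (so `d = m+1`):
`q(x,y) = ∫_{ℝ^d_-} Ψ(|y-z|²/(y_d |z_d|)) |z_d|^α |x-z|^{-d-α} |y-z|^{-d-α} dz`. -/
noncomputable def resq (m : ℕ) (α : ℝ) (Ψ : ℝ → ℝ)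
    (x y : EuclideanSpace ℝ (Fin m) × ℝ) : ℝ :=
  ∫ z in {z : EuclideanSpace ℝ (Fin m) × ℝ | z.2 < 0},
    Ψ (nrm (y - z) ^ 2 / (y.2 * |z.2|)) * |z.2| ^ α *
      nrm (x - z) ^ (-(m + 1 : ℝ) - α) * nrm (y - z) ^ (-(m + 1 : ℝ) - α)

/-- The resurrection kernel is symmetric: `q(x,y) = q(y,x)` for all
`x, y` in the upper half-space. Here the dimension is `d = n + 1 ≥ 1`. -/
theorem resurrection_kernel_symmetric
    (n : ℕ) (α γ₁ γ₂ C₁ C₂ : ℝ) (Ψ : ℝ → ℝ)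
    (hα : 0 < α) (hα2 : α < 2)
    (hγ : γ₁ ≤ γ₂) (hγ₂ : γ₂ < min 1 α)
    (hC₁ : 0 < C₁) (hC₂ : 0 < C₂)
    (hmeas : Measurable Ψ)
    (hpos : ∀ t : ℝ, 0 ≤ t → 0 < Ψ t)
    (hflat : ∀ t : ℝ, 0 ≤ t → t < 2 → Ψ t = Ψ 2)
    (hscale : ∀ r R : ℝ, 2 ≤ r → r < R →
      C₁ * (R / r) ^ γ₁ ≤ Ψ R / Ψ r ∧ Ψ R / Ψ r ≤ C₂ * (R / r) ^ γ₂)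
    (x y : EuclideanSpace ℝ (Fin n) × ℝ) (hx : 0 < x.2) (hy : 0 < y.2) :
    resq n α Ψ x y = resq n α Ψ y x := by
  classical
  have hx2 : x.2 ≠ 0 := hx.ne'
  have hy2 : y.2 ≠ 0 := hy.ne'
  set s : Set (EuclideanSpace ℝ (Fin n) × ℝ) := {z | z.2 < 0} with hs_def
  have hs : MeasurableSet s := measurableSet_lt measurable_snd measurable_const
  have hczero : 0 < cC x y := cC_pos hx hy
  have hNpos : ∀ z ∈ s, 0 < nsq (z - aP x y) := by
    intro z hz
    apply nsq_pos
    rw [sub_aP_snd]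
    exact (ne_of_lt hz)
  have hmapsto : ∀ z ∈ s, Tm x y z ∈ s := by
    intro z hz
    have h1 : (Tm x y z).2 = cC x y / nsq (z - aP x y) * z.2 := Tm_snd z
    have h2 : 0 < cC x y / nsq (z - aP x y) := div_pos hczero (hNpos z hz)
    have : (Tm x y z).2 < 0 := by
      rw [h1]; exact mul_neg_of_pos_of_neg h2 hz
    exact this
  have hinvol : ∀ z ∈ s, Tm x y (Tm x y z) = z := fun z hz =>
    Tm_invol hx hy z (ne_of_lt hz)
  have himg : Tm x y '' s = s := by
    apply Set.Subset.antisymm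
    · rintro _ ⟨z, hz, rfl⟩
      exact hmapsto z hz
    · intro z hz
      exact ⟨Tm x y z, hmapsto z hz, hinvol z hz⟩
  have hinj : Set.InjOn (Tm x y) s := by
    intro z hz w hw h
    rw [← hinvol z hz, ← hinvol w hw, h]
  have hder : ∀ z ∈ s, HasFDerivWithinAt (Tm x y) (fderiv ℝ (Tm x y) z) s z := fun z hz =>
    ((Tm_fderiv x y z (hNpos z hz).ne').1).hasFDerivWithinAt
  haveI : (volume : Measure (EuclideanSpace ℝ (Fin n) × ℝ)).IsAddHaarMeasure :=
    Measure.prod.instIsAddHaarMeasure _ _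
  have hCoV := integral_image_eq_integral_abs_det_fderiv_smul volume hs hder hinj
    (fun z => Ψ (nrm (y - z) ^ 2 / (y.2 * |z.2|)) * |z.2| ^ α *
      nrm (x - z) ^ (-(n + 1 : ℝ) - α) * nrm (y - z) ^ (-(n + 1 : ℝ) - α))
  rw [himg] at hCoV
  show (∫ z in s, Ψ (nrm (y - z) ^ 2 / (y.2 * |z.2|)) * |z.2| ^ α *
      nrm (x - z) ^ (-(n + 1 : ℝ) - α) * nrm (y - z) ^ (-(n + 1 : ℝ) - α))
    = ∫ z in s, Ψ (nrm (x - z) ^ 2 / (x.2 * |z.2|)) * |z.2| ^ α *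
      nrm (y - z) ^ (-(n + 1 : ℝ) - α) * nrm (x - z) ^ (-(n + 1 : ℝ) - α)
  rw [hCoV]
  apply setIntegral_congr_fun hs
  intro z hz
  have hz2 : z.2 < 0 := hz
  have habsz : |z.2| ≠ 0 := abs_ne_zero.mpr (ne_of_lt hz2)
  have hN : 0 < nsq (z - aP x y) := hNpos z hz
  have hNx : 0 < nsq (x - aP x y) := nsq_x_sub_aP_pos hx hy
  have hNy : 0 < nsq (y - aP x y) := nsq_y_sub_aP_pos hx hy
  have hlam : 0 < cC x y / nsq (z - aP x y) := div_pos hczero hN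
  set lam : ℝ := cC x y / nsq (z - aP x y) with hlam_def
  have hdet : |(fderiv ℝ (Tm x y) z).det| = lam ^ (n + 1) :=
    Tm_det x y z hN hczero _ (Tm_fderiv x y z hN.ne').2
  have hTz2 : |(Tm x y z).2| = lam * |z.2| := by
    rw [Tm_snd z, ← hlam_def, abs_mul, abs_of_pos hlam]
  -- squared distances
  have hgen : ∀ a b c q : ℝ, b ≠ 0 → c ≠ 0 → a ^ 2 * q / (b * c) = a / b * (a / c) * q := by
    intro a b c q hb hc
    rw [div_mul_div_comm, div_mul_eq_mul_div, pow_two]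
  have hd1 : nsq (y - Tm x y z) = (y.2 / x.2) * lam * nsq (x - z) := by
    have h1 := Tm_dist (x := x) (y := y) x z hNx.ne' hN.ne'
    rw [Tm_x hx hy] at h1
    rw [h1, hgen _ _ _ _ hNx.ne' hN.ne', cC_div_nsq_x hx hy, hlam_def]
  have hd2 : nsq (x - Tm x y z) = (x.2 / y.2) * lam * nsq (y - z) := by
    have h1 := Tm_dist (x := x) (y := y) y z hNy.ne' hN.ne'
    rw [Tm_y hx hy] at h1
    rw [h1, hgen _ _ _ _ hNy.ne' hN.ne', cC_div_nsq_y hx hy, hlam_def]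
  have hk1 : (0:ℝ) ≤ (y.2 / x.2) * lam := by positivity
  have hk2 : (0:ℝ) ≤ (x.2 / y.2) * lam := by positivity
  have hnrm1 : nrm (y - Tm x y z) = Real.sqrt ((y.2 / x.2) * lam) * nrm (x - z) := by
    rw [nrm_eq_sqrt_nsq, hd1, Real.sqrt_mul hk1, ← nrm_eq_sqrt_nsq]
  have hnrm2 : nrm (x - Tm x y z) = Real.sqrt ((x.2 / y.2) * lam) * nrm (y - z) := by
    rw [nrm_eq_sqrt_nsq, hd2, Real.sqrt_mul hk2, ← nrm_eq_sqrt_nsq]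
  -- the argument of Ψ transforms correctly
  have harg : nrm (y - Tm x y z) ^ 2 / (y.2 * |(Tm x y z).2|)
      = nrm (x - z) ^ 2 / (x.2 * |z.2|) := by
    rw [nrm_sq, nrm_sq, hd1, hTz2]
    field_simp
  -- rpow factorizations
  set e : ℝ := -(n + 1 : ℝ) - α with he_def
  have hrp1 : nrm (y - Tm x y z) ^ e = Real.sqrt ((y.2 / x.2) * lam) ^ e * nrm (x - z) ^ e := by
    rw [hnrm1, Real.mul_rpow (Real.sqrt_nonneg _) (nrm_nonneg _)]
  have hrp2 : nrm (x - Tm x y z) ^ e = Real.sqrt ((x.2 / y.2) * lam) ^ e * nrm (y - z) ^ e := by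
    rw [hnrm2, Real.mul_rpow (Real.sqrt_nonneg _) (nrm_nonneg _)]
  have hrpz : |(Tm x y z).2| ^ α = lam ^ α * |z.2| ^ α := by
    rw [hTz2, Real.mul_rpow hlam.le (abs_nonneg _)]
  -- the scalar factors multiply to 1
  have hs12 : Real.sqrt ((y.2 / x.2) * lam) ^ e * Real.sqrt ((x.2 / y.2) * lam) ^ e
      = lam ^ e := by
    rw [← Real.mul_rpow (Real.sqrt_nonneg _) (Real.sqrt_nonneg _), ← Real.sqrt_mul hk1]
    have : (y.2 / x.2) * lam * ((x.2 / y.2) * lam) = lam ^ 2 := by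
      field_simp
    rw [this, Real.sqrt_sq hlam.le]
  have hkey : (lam ^ (n + 1) : ℝ) * lam ^ α
      * (Real.sqrt ((y.2 / x.2) * lam) ^ e * Real.sqrt ((x.2 / y.2) * lam) ^ e) = 1 := by
    rw [hs12, ← Real.rpow_natCast lam (n + 1), ← Real.rpow_add hlam, ← Real.rpow_add hlam]
    rw [show ((n + 1 : ℕ) : ℝ) + α + e = 0 by push_cast [he_def]; ring, Real.rpow_zero]
  -- put everything together
  simp only [smul_eq_mul]
  rw [hdet, harg, hrp1, hrp2, hrpz]
  linear_combination (Ψ (nrm (x - z) ^ 2 / (x.2 * |z.2|)) * |z.2| ^ α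
    * nrm (x - z) ^ e * nrm (y - z) ^ e) * hkey
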